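/- arXiv:q-alg/9612027 — 3 statements merged into one kernel-verified Lean document; each statement's English description precedes it below -/
import Mathlib

section
/- Let n, k ∈ ℕ with k ≤ n. Suppose f₀, …, f_k : ℂ → ℂ are functions such that for every polynomial p ∈ 𝒫ₙ the function x ↦ Σ_{i=0}^{k} f_i(x)·(eval x (p⁽ⁱ⁾)) is the evaluation function of some element of 𝒫ₙ (where p⁽ⁱ⁾ is the i-th formal derivative of p). Then each f_i is the evaluation function of a polynomial g_i ∈ Polynomial ℂ, and the ℂ-linear endomorphism T = Σ_{i=0}^{k} M_{g_i} ∘ D^i of Polynomial ℂ lies in the ℂ-linear span of all compositions of at most k elements of {J⁺, J⁻, J⁰} (the empty composition being the identity). -/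
noncomputable section

open Polynomial

/-- The formal derivative as a `ℂ`-linear endomorphism of `Polynomial ℂ`. -/
def D1 : Module.End ℂ (Polynomial ℂ) := Polynomial.derivative

/-- Multiplication by a polynomial `g` as an endomorphism. -/
def M1 (g : Polynomial ℂ) : Module.End ℂ (Polynomial ℂ) := LinearMap.mulLeft ℂ g

/-- The module `𝒫ₙ`, the span of `Xⁱ` for `0 ≤ i ≤ n`. -/
def Pmod (n : ℕ) : Submodule ℂ (Polynomial ℂ) :=
  Submodule.span ℂ {p : Polynomial ℂ | ∃ i ≤ n, p = X ^ i}

/-- `J⁺ = M_{X²}∘D − n·M_X`. -/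
def Jp (n : ℕ) : Module.End ℂ (Polynomial ℂ) := M1 (X ^ 2) * D1 - (n : ℂ) • M1 X

/-- `J⁻ = D`. -/
def Jm : Module.End ℂ (Polynomial ℂ) := D1

/-- `J⁰ = M_X∘D − (n/2)·id`. -/
def J0 (n : ℕ) : Module.End ℂ (Polynomial ℂ) := M1 X * D1 - ((n : ℂ) / 2) • 1

/-- All compositions (products) of at most `k` elements of `S`; the empty
composition is the identity. -/
def prodsLE (k : ℕ) (S : Set (Module.End ℂ (Polynomial ℂ))) :
    Set (Module.End ℂ (Polynomial ℂ)) :=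
  {T | ∃ l : List (Module.End ℂ (Polynomial ℂ)),
    l.length ≤ k ∧ (∀ a ∈ l, a ∈ S) ∧ l.prod = T}


namespace Turb


lemma end_ext {A B : Module.End ℂ (Polynomial ℂ)} (h : ∀ j : ℕ, A (X ^ j) = B (X ^ j)) :
    A = B := by
  apply Polynomial.lhom_ext'
  intro m
  apply LinearMap.ext
  intro c
  have hm : (monomial m c : Polynomial ℂ) = c • X ^ m := by
    rw [← C_mul_X_pow_eq_monomial, ← smul_eq_C_mul]
  simp only [LinearMap.comp_apply, hm, map_smul, h m]

lemma M1_apply (g p : Polynomial ℂ) : M1 g p = g * p := rfl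

lemma D1_pow_X_pow (i j : ℕ) :
    (D1 ^ i) (X ^ j : Polynomial ℂ) = (j.descFactorial i : ℂ) • X ^ (j - i) := by
  rw [Module.End.pow_apply]
  show Polynomial.derivative^[i] (X ^ j) = _
  rw [Polynomial.iterate_derivative_X_pow_eq_smul]

lemma U_X_pow (m i j : ℕ) :
    (M1 (X ^ m) * D1 ^ i) (X ^ j : Polynomial ℂ)
      = (j.descFactorial i : ℂ) • X ^ (m + (j - i)) := by
  rw [Module.End.mul_apply, D1_pow_X_pow, map_smul, M1_apply, ← pow_add]

lemma X_pow_mem_Pmod {n j : ℕ} (h : j ≤ n) : (X ^ j : Polynomial ℂ) ∈ Pmod n :=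
  Submodule.subset_span ⟨j, h, rfl⟩

lemma coeff_eq_zero_of_mem_Pmod {n : ℕ} {p : Polynomial ℂ} (hp : p ∈ Pmod n) {w : ℕ}
    (hw : n < w) : p.coeff w = 0 := by
  have hle : Pmod n ≤ Polynomial.degreeLE ℂ n := by
    rw [Pmod, Submodule.span_le]
    rintro q ⟨i, hi, rfl⟩
    rw [SetLike.mem_coe, Polynomial.mem_degreeLE, Polynomial.degree_X_pow]
    exact_mod_cast hi
  apply Polynomial.coeff_eq_zero_of_degree_lt
  exact lt_of_le_of_lt (Polynomial.mem_degreeLE.1 (hle hp)) (by exact_mod_cast hw)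

lemma D1_X_pow (j : ℕ) : D1 (X ^ j : Polynomial ℂ) = (j : ℂ) • X ^ (j - 1) := by
  have := D1_pow_X_pow 1 j
  simpa using this

lemma J0_X_pow (n j : ℕ) : J0 n (X ^ j : Polynomial ℂ) = ((j : ℂ) - n / 2) • X ^ j := by
  rcases Nat.eq_zero_or_pos j with rfl | hj
  · simp [J0, D1, M1_apply, sub_smul]
  · rw [J0, LinearMap.sub_apply, Module.End.mul_apply, D1_X_pow, map_smul, M1_apply,
      ← pow_succ', Nat.sub_add_cancel hj]
    simp [sub_smul]

lemma Jp_X_pow (n j : ℕ) : Jp n (X ^ j : Polynomial ℂ) = ((j : ℂ) - n) • X ^ (j + 1) := by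
  have key : (j : ℂ) • (X : Polynomial ℂ) ^ (2 + (j - 1)) = (j : ℂ) • X ^ (j + 1) := by
    rcases Nat.eq_zero_or_pos j with rfl | hj
    · simp
    · rw [show 2 + (j - 1) = j + 1 by omega]
  rw [Jp, LinearMap.sub_apply, Module.End.mul_apply, D1_X_pow, map_smul, M1_apply, ← pow_add,
    LinearMap.smul_apply, M1_apply, key, ← pow_succ', sub_smul]

lemma J0_pow_X_pow (n b j : ℕ) :
    ((J0 n) ^ b) (X ^ j : Polynomial ℂ) = ((j : ℂ) - n / 2) ^ b • X ^ j := by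
  induction b with
  | zero => simp
  | succ b ih =>
    rw [pow_succ, Module.End.mul_apply, J0_X_pow, map_smul, ih, smul_smul, pow_succ]
    ring_nf

lemma Jp_pow_X_pow (n d j : ℕ) :
    ((Jp n) ^ d) (X ^ j : Polynomial ℂ)
      = (∏ s ∈ Finset.range d, ((j : ℂ) + s - n)) • X ^ (j + d) := by
  induction d generalizing j with
  | zero => simp
  | succ d ih =>
    have h1 : (∏ s ∈ Finset.range (d+1), ((j : ℂ) + s - n))
        = ((j : ℂ) - n) * ∏ s ∈ Finset.range d, (((j + 1 : ℕ) : ℂ) + s - n) := by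
      rw [Finset.prod_range_succ', mul_comm]
      congr 1
      · push_cast; ring
      · apply Finset.prod_congr rfl
        intro s _
        push_cast
        ring
    rw [pow_succ, Module.End.mul_apply, Jp_X_pow, map_smul, ih, smul_smul, h1,
      show j + 1 + d = j + (d + 1) by omega]


lemma pow_mul_pow_mem_prodsLE' {S : Set (Module.End ℂ (Polynomial ℂ))} {x y : Module.End ℂ (Polynomial ℂ)}
    (hx : x ∈ S) (hy : y ∈ S) {k d b : ℕ} (h : d + b ≤ k) :
    ∃ l : List (Module.End ℂ (Polynomial ℂ)),
      l.length ≤ k ∧ (∀ a ∈ l, a ∈ S) ∧ l.prod = x ^ d * y ^ b := by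
  refine ⟨List.replicate d x ++ List.replicate b y, by simpa using h, ?_, ?_⟩
  · intro a ha
    rcases List.mem_append.1 ha with h' | h' <;>
      rw [List.eq_of_mem_replicate h'] <;> assumption
  · rw [List.prod_append, List.prod_replicate, List.prod_replicate]

lemma eval_eq_taylor_sum (Q : Polynomial ℂ) (α x : ℂ) {m : ℕ} (hQ : Q.natDegree ≤ m) :
    Q.eval x = ∑ b ∈ Finset.range (m + 1), (taylor α Q).coeff b * (x - α) ^ b := by
  have h1 : ((taylor α Q).sum fun i a => C a * (X - C α) ^ i)
      = ∑ b ∈ Finset.range (m + 1), C ((taylor α Q).coeff b) * (X - C α) ^ b := by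
    apply Polynomial.sum_over_range'
    · intro b; rw [C_0, zero_mul]
    · rw [natDegree_taylor]; omega
  conv_lhs => rw [← sum_taylor_eq Q α]
  rw [h1, eval_finset_sum]
  apply Finset.sum_congr rfl
  intro b _
  rw [eval_mul, eval_C, eval_pow, eval_sub, eval_X, eval_C]

lemma exists_factor (r : ℕ → ℂ) :
    ∀ (e : ℕ) (P : Polynomial ℂ), (∀ s t, s < e → t < e → r s = r t → s = t) →
      (∀ s < e, P.eval (r s) = 0) →
      ∃ Q, P = (∏ s ∈ Finset.range e, (X - C (r s))) * Q := by
  intro e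
  induction e with
  | zero => exact fun P _ _ => ⟨P, by simp⟩
  | succ e ih =>
    intro P hinj hroot
    obtain ⟨P₁, hP₁⟩ := dvd_iff_isRoot.2 (hroot e (Nat.lt_succ_self e))
    obtain ⟨Q, hQ⟩ := ih P₁
      (fun s t hs ht hst => hinj s t (hs.trans (Nat.lt_succ_self e)) (ht.trans (Nat.lt_succ_self e)) hst)
      (fun s hs => by
        have h0 := hroot s (hs.trans (Nat.lt_succ_self e))
        rw [hP₁, eval_mul, eval_sub, eval_X, eval_C] at h0
        rcases mul_eq_zero.1 h0 with h' | h'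
        · exact absurd (hinj s e (hs.trans (Nat.lt_succ_self e)) (Nat.lt_succ_self e)
            (sub_eq_zero.1 h')) (Nat.ne_of_lt hs)
        · exact h')
    exact ⟨Q, by rw [Finset.prod_range_succ, hP₁, hQ]; ring⟩

lemma exists_factor_deg (r : ℕ → ℂ) (k e : ℕ) (P : Polynomial ℂ)
    (hinj : ∀ s t, s < e → t < e → r s = r t → s = t)
    (hroot : ∀ s < e, P.eval (r s) = 0) (hP : P.natDegree ≤ k) (he : e ≤ k) :
    ∃ Q, P = (∏ s ∈ Finset.range e, (X - C (r s))) * Q ∧ Q.natDegree ≤ k - e := by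
  obtain ⟨Q, hQ⟩ := exists_factor r e P hinj hroot
  by_cases hQ0 : Q = 0
  · exact ⟨Q, hQ, by simp [hQ0]⟩
  · refine ⟨Q, hQ, ?_⟩
    have hR : (∏ s ∈ Finset.range e, (X - C (r s))).natDegree = e := by
      rw [Polynomial.natDegree_prod _ _ (fun s _ => X_sub_C_ne_zero (r s))]
      simp [natDegree_X_sub_C]
    have hne : (∏ s ∈ Finset.range e, (X - C (r s))) ≠ 0 :=
      Polynomial.Monic.ne_zero (monic_prod_of_monic _ _ fun s _ => monic_X_sub_C (r s))
    have := Polynomial.natDegree_mul hne hQ0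
    rw [← hQ, hR] at this
    omega

lemma eq_zero_of_many_roots (r : ℕ → ℂ) (k : ℕ) (P : Polynomial ℂ)
    (hinj : ∀ s t, s < k + 1 → t < k + 1 → r s = r t → s = t)
    (hroot : ∀ s < k + 1, P.eval (r s) = 0) (hP : P.natDegree ≤ k) : P = 0 := by
  obtain ⟨Q, hQ⟩ := exists_factor r (k + 1) P hinj hroot
  by_cases hQ0 : Q = 0
  · rw [hQ, hQ0, mul_zero]
  · exfalso
    have hR : (∏ s ∈ Finset.range (k + 1), (X - C (r s))).natDegree = k + 1 := by
      rw [Polynomial.natDegree_prod _ _ (fun s _ => X_sub_C_ne_zero (r s))]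
      simp [natDegree_X_sub_C]
    have hne : (∏ s ∈ Finset.range (k + 1), (X - C (r s))) ≠ 0 :=
      Polynomial.Monic.ne_zero (monic_prod_of_monic _ _ fun s _ => monic_X_sub_C (r s))
    have := Polynomial.natDegree_mul hne hQ0
    rw [← hQ, hR] at this
    omega



lemma OpB_X_pow (n k c : ℕ) (Q : Polynomial ℂ) (hQ : Q.natDegree ≤ k - c) (j : ℕ) :
    (∑ b ∈ Finset.range (k - c + 1),
        ((taylor ((c : ℂ) + n / 2) Q).coeff b) • ((J0 n) ^ b * Jm ^ c)) (X ^ j)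
      = ((j.descFactorial c : ℂ) * Q.eval (j : ℂ)) • X ^ (j - c) := by
  rw [LinearMap.sum_apply]
  have hterm : ∀ b, (((taylor ((c : ℂ) + n / 2) Q).coeff b) • ((J0 n) ^ b * Jm ^ c)) (X ^ j)
      = ((taylor ((c : ℂ) + n / 2) Q).coeff b * (j.descFactorial c : ℂ)
          * (((j - c : ℕ) : ℂ) - n / 2) ^ b) • X ^ (j - c) := by
    intro b
    rw [LinearMap.smul_apply, Module.End.mul_apply, show (Jm ^ c) = (D1 ^ c) by rw [Jm],
      D1_pow_X_pow, map_smul, J0_pow_X_pow, smul_smul, smul_smul]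
  simp only [hterm]
  rw [← Finset.sum_smul]
  by_cases hjc : c ≤ j
  · congr 1
    have hcast : ((j - c : ℕ) : ℂ) = (j : ℂ) - c := by
      push_cast [hjc]; ring
    rw [eval_eq_taylor_sum Q ((c : ℂ) + n / 2) (j : ℂ) hQ, Finset.mul_sum]
    apply Finset.sum_congr rfl
    intro b _
    rw [hcast]
    ring_nf
  · have h0 : j.descFactorial c = 0 := Nat.descFactorial_eq_zero_iff_lt.2 (by omega)
    rw [h0]
    simp

lemma OpA_X_pow (n k d : ℕ) (Q : Polynomial ℂ) (hQ : Q.natDegree ≤ k - d) (j : ℕ) :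
    (∑ b ∈ Finset.range (k - d + 1),
        ((taylor ((n : ℂ) / 2) Q).coeff b) • ((Jp n) ^ d * (J0 n) ^ b)) (X ^ j)
      = ((∏ s ∈ Finset.range d, ((j : ℂ) + s - n)) * Q.eval (j : ℂ)) • X ^ (j + d) := by
  rw [LinearMap.sum_apply]
  have hterm : ∀ b, (((taylor ((n : ℂ) / 2) Q).coeff b) • ((Jp n) ^ d * (J0 n) ^ b)) (X ^ j)
      = ((taylor ((n : ℂ) / 2) Q).coeff b * ((j : ℂ) - n / 2) ^ b
          * (∏ s ∈ Finset.range d, ((j : ℂ) + s - n))) • X ^ (j + d) := by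
    intro b
    rw [LinearMap.smul_apply, Module.End.mul_apply, J0_pow_X_pow, map_smul, Jp_pow_X_pow,
      smul_smul, smul_smul]
  simp only [hterm]
  rw [← Finset.sum_smul]
  congr 1
  rw [eval_eq_taylor_sum Q ((n : ℂ) / 2) (j : ℂ) hQ, Finset.mul_sum]
  apply Finset.sum_congr rfl
  intro b _
  ring


lemma Tpos_eq (k : ℕ) (g : ℕ → Polynomial ℂ) (e j : ℕ) :
    (∑ i ∈ Finset.range (k + 1), ((g i).coeff (i + e)) • (M1 (X ^ (i + e)) * D1 ^ i)) (X ^ j)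
      = ((∑ i ∈ Finset.range (k + 1),
            C ((g i).coeff (i + e)) * descPochhammer ℂ i).eval (j : ℂ)) • X ^ (j + e) := by
  rw [LinearMap.sum_apply, eval_finset_sum, Finset.sum_smul]
  apply Finset.sum_congr rfl
  intro i _
  rw [LinearMap.smul_apply, U_X_pow, smul_smul, eval_mul, eval_C,
    descPochhammer_eval_eq_descFactorial]
  by_cases hij : i ≤ j
  · rw [show i + e + (j - i) = j + e by omega]
  · rw [Nat.descFactorial_eq_zero_iff_lt.2 (by omega)]
    simp

lemma Tneg_eq (k c : ℕ) (g : ℕ → Polynomial ℂ) (j : ℕ) :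
    (∑ i ∈ Finset.Icc c k, ((g i).coeff (i - c)) • (M1 (X ^ (i - c)) * D1 ^ i)) (X ^ j)
      = ((j.descFactorial c : ℂ) *
         (∑ i ∈ Finset.Icc c k, C ((g i).coeff (i - c)) *
            ((descPochhammer ℂ (i - c)).comp (X - C (c : ℂ)))).eval (j : ℂ)) • X ^ (j - c) := by
  rw [LinearMap.sum_apply, eval_finset_sum, Finset.mul_sum, Finset.sum_smul]
  apply Finset.sum_congr rfl
  intro i hi
  obtain ⟨hci, hik⟩ := Finset.mem_Icc.1 hi
  rw [LinearMap.smul_apply, U_X_pow, smul_smul, eval_mul, eval_C, eval_comp, eval_sub, eval_X,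
    eval_C]
  by_cases hij : i ≤ j
  · have hcj : c ≤ j := hci.trans hij
    have hcast : ((j : ℂ) - c) = ((j - c : ℕ) : ℂ) := by push_cast [hcj]; ring
    rw [hcast, descPochhammer_eval_eq_descFactorial, show i - c + (j - i) = j - c by omega]
    congr 1
    rw [← Nat.descFactorial_mul_descFactorial hci]
    push_cast
    ring
  · rw [Nat.descFactorial_eq_zero_iff_lt.2 (show j < i by omega)]
    by_cases hcj : c ≤ j
    · have hcast : ((j : ℂ) - c) = ((j - c : ℕ) : ℂ) := by push_cast [hcj]; ring
      rw [hcast, descPochhammer_eval_eq_descFactorial,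
        Nat.descFactorial_eq_zero_iff_lt.2 (show j - c < i - c by omega)]
      simp
    · rw [Nat.descFactorial_eq_zero_iff_lt.2 (show j < c by omega)]
      simp

lemma eval_Ppos_eq_coeff (k : ℕ) (g : ℕ → Polynomial ℂ) (e j : ℕ) :
    (∑ i ∈ Finset.range (k + 1), C ((g i).coeff (i + e)) * descPochhammer ℂ i).eval (j : ℂ)
      = ((∑ i ∈ Finset.range (k + 1), M1 (g i) * D1 ^ i) (X ^ j)).coeff (j + e) := by
  rw [LinearMap.sum_apply, eval_finset_sum, finset_sum_coeff]
  apply Finset.sum_congr rfl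
  intro i _
  rw [Module.End.mul_apply, D1_pow_X_pow, map_smul, M1_apply, coeff_smul, eval_mul, eval_C,
    descPochhammer_eval_eq_descFactorial, coeff_mul_X_pow', if_pos (show j - i ≤ j + e by omega),
    smul_eq_mul]
  by_cases hij : i ≤ j
  · rw [show j + e - (j - i) = i + e by omega]
    ring
  · rw [Nat.descFactorial_eq_zero_iff_lt.2 (by omega)]
    simp


lemma structural (n k : ℕ) (hk : k ≤ n) (g : ℕ → Polynomial ℂ)
    (hT : ∀ j, j ≤ n → (∑ i ∈ Finset.range (k + 1), M1 (g i) * D1 ^ i) (X ^ j) ∈ Pmod n) :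
    (∑ i ∈ Finset.range (k + 1), M1 (g i) * D1 ^ i) ∈
      Submodule.span ℂ (prodsLE k {Jp n, Jm, J0 n}) := by
  have hJp : Jp n ∈ ({Jp n, Jm, J0 n} : Set (Module.End ℂ (Polynomial ℂ))) :=
    Set.mem_insert _ _
  have hJm : Jm ∈ ({Jp n, Jm, J0 n} : Set (Module.End ℂ (Polynomial ℂ))) :=
    Set.mem_insert_of_mem _ (Set.mem_insert _ _)
  have hJ0 : J0 n ∈ ({Jp n, Jm, J0 n} : Set (Module.End ℂ (Polynomial ℂ))) :=
    Set.mem_insert_of_mem _ (Set.mem_insert_of_mem _ rfl)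
  have hmemW : ∀ x y : Module.End ℂ (Polynomial ℂ),
      x ∈ ({Jp n, Jm, J0 n} : Set (Module.End ℂ (Polynomial ℂ))) →
      y ∈ ({Jp n, Jm, J0 n} : Set (Module.End ℂ (Polynomial ℂ))) →
      ∀ d b : ℕ, d + b ≤ k →
      x ^ d * y ^ b ∈ Submodule.span ℂ (prodsLE k {Jp n, Jm, J0 n}) := by
    intro x y hx hy d b h
    exact Submodule.subset_span (pow_mul_pow_mem_prodsLE' hx hy h)
  -- roots of the positive symbols
  have hroot : ∀ e s : ℕ, s < e → s ≤ k →
      (∑ i ∈ Finset.range (k + 1), C ((g i).coeff (i + e)) * descPochhammer ℂ i).eval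
        (((n - s : ℕ)) : ℂ) = 0 := by
    intro e s hse hsk
    rw [eval_Ppos_eq_coeff]
    exact coeff_eq_zero_of_mem_Pmod (hT (n - s) (Nat.sub_le n s)) (by omega)
  have hrinj : ∀ s t : ℕ, s ≤ k → t ≤ k →
      (((n - s : ℕ)) : ℂ) = (((n - t : ℕ)) : ℂ) → s = t := by
    intro s t hs ht h
    have h2 : (n - s : ℕ) = (n - t : ℕ) := Nat.cast_injective h
    omega
  have hPdeg : ∀ e : ℕ,
      (∑ i ∈ Finset.range (k + 1), C ((g i).coeff (i + e)) * descPochhammer ℂ i).natDegree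
        ≤ k := by
    intro e
    apply Polynomial.natDegree_sum_le_of_forall_le
    intro i hi
    refine le_trans (Polynomial.natDegree_C_mul_le _ _) ?_
    rw [descPochhammer_natDegree]
    exact Nat.lt_succ_iff.1 (Finset.mem_range.1 hi)
  set N := (Finset.range (k + 1)).sup fun i => (g i).natDegree with hN
  have hcoe0 : ∀ i, i ≤ k → ∀ m : ℕ, N < m → (g i).coeff m = 0 := by
    intro i hi m hm
    apply Polynomial.coeff_eq_zero_of_natDegree_lt
    have hle : (g i).natDegree ≤ N :=
      Finset.le_sup (f := fun i => (g i).natDegree) (Finset.mem_range.2 (Nat.lt_succ_of_le hi))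
    omega
  have hM1 : ∀ i ∈ Finset.range (k + 1),
      M1 (g i) = ∑ m ∈ Finset.range (N + 1), ((g i).coeff m) • M1 (X ^ m) := by
    intro i hi
    have hgi : g i = ∑ m ∈ Finset.range (N + 1), ((g i).coeff m) • (X ^ m : Polynomial ℂ) := by
      have hle : (g i).natDegree ≤ N :=
        Finset.le_sup (f := fun i => (g i).natDegree) hi
      conv_lhs => rw [Polynomial.as_sum_range' (g i) (N + 1) (Nat.lt_succ_of_le hle)]
      apply Finset.sum_congr rfl
      intro m _
      rw [← C_mul_X_pow_eq_monomial, ← smul_eq_C_mul]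
    apply LinearMap.ext
    intro p
    conv_lhs => rw [hgi]
    rw [M1_apply, Finset.sum_mul, LinearMap.sum_apply]
    apply Finset.sum_congr rfl
    intro m _
    rw [smul_mul_assoc, LinearMap.smul_apply, M1_apply]
  have hT2 : (∑ i ∈ Finset.range (k + 1), M1 (g i) * D1 ^ i)
      = ∑ p ∈ (Finset.range (k + 1)) ×ˢ (Finset.range (N + 1)),
          ((g p.1).coeff p.2) • (M1 (X ^ p.2) * D1 ^ p.1) := by
    rw [Finset.sum_product]
    apply Finset.sum_congr rfl
    intro i hi
    rw [hM1 i hi, Finset.sum_mul]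
    apply Finset.sum_congr rfl
    intro m _
    rw [smul_mul_assoc]
  have hmaps : ∀ p ∈ (Finset.range (k + 1)) ×ˢ (Finset.range (N + 1)),
      ((p.2 : ℤ) - p.1) ∈ Finset.Icc (-(k : ℤ)) (N : ℤ) := by
    intro p hp
    obtain ⟨h1, h2⟩ := Finset.mem_product.1 hp
    rw [Finset.mem_range] at h1 h2
    rw [Finset.mem_Icc]
    omega
  have hfib := Finset.sum_fiberwise_of_maps_to hmaps
    (fun p : ℕ × ℕ => ((g p.1).coeff p.2) • (M1 (X ^ p.2) * D1 ^ p.1))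
  rw [hT2, ← hfib]
  apply Submodule.sum_mem
  intro d hd
  rw [Finset.mem_Icc] at hd
  obtain hd0 | hdneg := le_or_gt 0 d
  · -- nonnegative grade e = d.toNat
    set e := d.toNat with he
    have hde : d = (e : ℤ) := by omega
    have hsum1 : ∑ p ∈ (Finset.range (k + 1)) ×ˢ (Finset.range (N + 1)) with
          ((p.2 : ℤ) - p.1 = d),
          ((g p.1).coeff p.2) • (M1 (X ^ p.2) * D1 ^ p.1)
        = ∑ i ∈ Finset.range (k + 1) with (i + e ≤ N),
            ((g i).coeff (i + e)) • (M1 (X ^ (i + e)) * D1 ^ i) := by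
      apply Finset.sum_bij' (i := fun p _ => p.1) (j := fun i _ => (i, i + e))
      · intro p hp
        rw [Finset.mem_filter, Finset.mem_product, Finset.mem_range, Finset.mem_range] at hp
        rw [Finset.mem_filter, Finset.mem_range]
        omega
      · intro i hi
        rw [Finset.mem_filter, Finset.mem_range] at hi
        rw [Finset.mem_filter, Finset.mem_product, Finset.mem_range, Finset.mem_range]
        refine ⟨⟨hi.1, by omega⟩, by omega⟩
      · intro p hp
        rw [Finset.mem_filter, Finset.mem_product, Finset.mem_range, Finset.mem_range] at hp
        have : p.2 = p.1 + e := by omega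
        exact Prod.ext rfl this.symm
      · intro i hi
        rfl
      · intro p hp
        rw [Finset.mem_filter, Finset.mem_product, Finset.mem_range, Finset.mem_range] at hp
        have h2 : p.2 = p.1 + e := by omega
        rw [h2]
    have hsum2 : ∑ i ∈ Finset.range (k + 1) with (i + e ≤ N),
          ((g i).coeff (i + e)) • (M1 (X ^ (i + e)) * D1 ^ i)
        = ∑ i ∈ Finset.range (k + 1),
            ((g i).coeff (i + e)) • (M1 (X ^ (i + e)) * D1 ^ i) := by
      apply Finset.sum_filter_of_ne
      intro i hi hne
      by_contra hgt
      exact hne (by rw [hcoe0 i (Nat.lt_succ_iff.1 (Finset.mem_range.1 hi)) (i + e) (by omega),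
        zero_smul])
    rw [hsum1, hsum2]
    by_cases hek : e ≤ k
    · rcases Nat.eq_zero_or_pos e with he0 | he1
      · -- grade zero
        rw [he0]
        have hTE : (∑ i ∈ Finset.range (k + 1),
              ((g i).coeff (i + 0)) • (M1 (X ^ (i + 0)) * D1 ^ i))
            = ∑ b ∈ Finset.range (k - 0 + 1),
                ((taylor (((0 : ℕ) : ℂ) + n / 2)
                  (∑ i ∈ Finset.range (k + 1),
                    C ((g i).coeff (i + 0)) * descPochhammer ℂ i)).coeff b) •
                  ((J0 n) ^ b * Jm ^ 0) := by
          apply end_ext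
          intro j
          rw [Tpos_eq, OpB_X_pow n k 0 _ (by simpa using hPdeg 0) j]
          simp
        rw [hTE]
        apply Submodule.sum_mem
        intro b hb
        apply Submodule.smul_mem
        apply hmemW _ _ hJ0 hJm
        rw [Finset.mem_range] at hb
        omega
      · -- positive grade
        obtain ⟨Q, hQ, hQdeg⟩ := exists_factor_deg (fun s => ((n - s : ℕ) : ℂ)) k e
          (∑ i ∈ Finset.range (k + 1), C ((g i).coeff (i + e)) * descPochhammer ℂ i)
          (fun s t hs ht => hrinj s t (by omega) (by omega))
          (fun s hs => hroot e s hs (by omega)) (hPdeg e) hek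
        have hTE : (∑ i ∈ Finset.range (k + 1),
              ((g i).coeff (i + e)) • (M1 (X ^ (i + e)) * D1 ^ i))
            = ∑ b ∈ Finset.range (k - e + 1),
                ((taylor ((n : ℂ) / 2) Q).coeff b) • ((Jp n) ^ e * (J0 n) ^ b) := by
          apply end_ext
          intro j
          rw [Tpos_eq, OpA_X_pow n k e Q hQdeg j]
          congr 1
          rw [hQ, eval_mul]
          congr 1
          rw [eval_prod]
          apply Finset.prod_congr rfl
          intro s hs
          rw [Finset.mem_range] at hs
          rw [eval_sub, eval_X, eval_C]
          have hsn : ((n - s : ℕ) : ℂ) = (n : ℂ) - s := by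
            push_cast [show s ≤ n by omega]
            ring
          rw [hsn]
          ring
        rw [hTE]
        apply Submodule.sum_mem
        intro b hb
        apply Submodule.smul_mem
        apply hmemW _ _ hJp hJ0
        rw [Finset.mem_range] at hb
        omega
    · -- grade too large : symbol vanishes
      have hP0 : (∑ i ∈ Finset.range (k + 1),
          C ((g i).coeff (i + e)) * descPochhammer ℂ i) = 0 :=
        eq_zero_of_many_roots (fun s => ((n - s : ℕ) : ℂ)) k _
          (fun s t hs ht => hrinj s t (by omega) (by omega))
          (fun s hs => hroot e s (by omega) (by omega)) (hPdeg e)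
      have hTE : (∑ i ∈ Finset.range (k + 1),
            ((g i).coeff (i + e)) • (M1 (X ^ (i + e)) * D1 ^ i))
          = (0 : Module.End ℂ (Polynomial ℂ)) := by
        apply end_ext
        intro j
        rw [Tpos_eq, hP0]
        simp
      rw [hTE]
      exact Submodule.zero_mem _
  · -- negative grade
    set c := (-d).toNat with hc
    have hdc : d = -(c : ℤ) := by omega
    have hc1 : 1 ≤ c := by omega
    have hck : c ≤ k := by omega
    have hsum1 : ∑ p ∈ (Finset.range (k + 1)) ×ˢ (Finset.range (N + 1)) with
          ((p.2 : ℤ) - p.1 = d),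
          ((g p.1).coeff p.2) • (M1 (X ^ p.2) * D1 ^ p.1)
        = ∑ i ∈ Finset.Icc c k with (i - c ≤ N),
            ((g i).coeff (i - c)) • (M1 (X ^ (i - c)) * D1 ^ i) := by
      apply Finset.sum_bij' (i := fun p _ => p.1) (j := fun i _ => (i, i - c))
      · intro p hp
        rw [Finset.mem_filter, Finset.mem_product, Finset.mem_range, Finset.mem_range] at hp
        rw [Finset.mem_filter, Finset.mem_Icc]
        omega
      · intro i hi
        rw [Finset.mem_filter, Finset.mem_Icc] at hi
        rw [Finset.mem_filter, Finset.mem_product, Finset.mem_range, Finset.mem_range]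
        refine ⟨⟨by omega, by omega⟩, by omega⟩
      · intro p hp
        rw [Finset.mem_filter, Finset.mem_product, Finset.mem_range, Finset.mem_range] at hp
        have : p.2 = p.1 - c := by omega
        exact Prod.ext rfl this.symm
      · intro i hi
        rfl
      · intro p hp
        rw [Finset.mem_filter, Finset.mem_product, Finset.mem_range, Finset.mem_range] at hp
        have h2 : p.2 = p.1 - c := by omega
        rw [h2]
    have hsum2 : ∑ i ∈ Finset.Icc c k with (i - c ≤ N),
          ((g i).coeff (i - c)) • (M1 (X ^ (i - c)) * D1 ^ i)
        = ∑ i ∈ Finset.Icc c k,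
            ((g i).coeff (i - c)) • (M1 (X ^ (i - c)) * D1 ^ i) := by
      apply Finset.sum_filter_of_ne
      intro i hi hne
      by_contra hgt
      rw [Finset.mem_Icc] at hi
      exact hne (by rw [hcoe0 i hi.2 (i - c) (by omega), zero_smul])
    have hQdeg : (∑ i ∈ Finset.Icc c k, C ((g i).coeff (i - c)) *
          ((descPochhammer ℂ (i - c)).comp (X - C (c : ℂ)))).natDegree ≤ k - c := by
      apply Polynomial.natDegree_sum_le_of_forall_le
      intro i hi
      rw [Finset.mem_Icc] at hi
      refine le_trans (Polynomial.natDegree_C_mul_le _ _) ?_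
      rw [Polynomial.natDegree_comp, descPochhammer_natDegree, natDegree_X_sub_C, mul_one]
      omega
    have hTE : (∑ i ∈ Finset.Icc c k,
          ((g i).coeff (i - c)) • (M1 (X ^ (i - c)) * D1 ^ i))
        = ∑ b ∈ Finset.range (k - c + 1),
            ((taylor ((c : ℂ) + n / 2)
              (∑ i ∈ Finset.Icc c k, C ((g i).coeff (i - c)) *
                ((descPochhammer ℂ (i - c)).comp (X - C (c : ℂ))))).coeff b) •
              ((J0 n) ^ b * Jm ^ c) := by
      apply end_ext
      intro j
      rw [Tneg_eq, OpB_X_pow n k c _ hQdeg j]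
    rw [hsum1, hsum2, hTE]
    apply Submodule.sum_mem
    intro b hb
    apply Submodule.smul_mem
    apply hmemW _ _ hJ0 hJm
    rw [Finset.mem_range] at hb
    omega


lemma eval_D1_pow_X_pow (i' m : ℕ) (x : ℂ) :
    ((D1 ^ i') (X ^ m : Polynomial ℂ)).eval x = (m.descFactorial i' : ℂ) * x ^ (m - i') := by
  rw [D1_pow_X_pow, smul_eq_C_mul, eval_mul, eval_C, eval_pow, eval_X]

end Turb

open Turb in
theorem stmt0 (n k : ℕ) (hk : k ≤ n) (f : ℕ → ℂ → ℂ)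
    (hpres : ∀ p ∈ Pmod n, ∃ q ∈ Pmod n, ∀ x : ℂ,
      ∑ i ∈ Finset.range (k + 1), f i x * ((D1 ^ i) p).eval x = q.eval x) :
    ∃ g : ℕ → Polynomial ℂ,
      (∀ i ≤ k, ∀ x : ℂ, f i x = (g i).eval x) ∧
      (∑ i ∈ Finset.range (k + 1), M1 (g i) * D1 ^ i) ∈
        Submodule.span ℂ (prodsLE k {Jp n, Jm, J0 n}) := by
  -- Step 1: find polynomial representatives
  have exg : ∀ m : ℕ, ∃ g : ℕ → Polynomial ℂ, ∀ i, i < m → i ≤ k →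
      ∀ x : ℂ, f i x = (g i).eval x := by
    intro m
    induction m with
    | zero => exact ⟨fun _ => 0, fun i hi => by omega⟩
    | succ m ih =>
      obtain ⟨g, hg⟩ := ih
      by_cases hmk : m ≤ k
      · obtain ⟨q, hq, hqe⟩ := hpres (X ^ m) (X_pow_mem_Pmod (hmk.trans hk))
        set gm : Polynomial ℂ := (m.factorial : ℂ)⁻¹ •
          (q - ∑ j ∈ Finset.range m, ((m.descFactorial j : ℂ)) • (g j * X ^ (m - j))) with hgm
        refine ⟨Function.update g m gm, ?_⟩
        intro i him hik x
        rcases Nat.lt_or_ge i m with hlt | hge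
        · rw [Function.update_of_ne (by omega)]
          exact hg i hlt hik x
        · have hieq : i = m := by omega
          subst hieq
          rw [Function.update_self]
          have h1 := hqe x
          simp only [eval_D1_pow_X_pow] at h1
          have h2 : ∑ i' ∈ Finset.range (k + 1), f i' x * ((i.descFactorial i' : ℂ) * x ^ (i - i'))
              = ∑ i' ∈ Finset.range (i + 1), f i' x * ((i.descFactorial i' : ℂ) * x ^ (i - i')) := by
            symm
            apply Finset.sum_subset (by
              apply Finset.range_subset_range.2
              omega)
            intro i' _ hnot
            rw [Finset.mem_range] at hnot
            rw [Nat.descFactorial_eq_zero_iff_lt.2 (by omega)]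
            push_cast
            ring
          rw [h2, Finset.sum_range_succ, Nat.descFactorial_self, Nat.sub_self, pow_zero,
            mul_one] at h1
          have hfx : f i x * (i.factorial : ℂ)
              = q.eval x - ∑ j ∈ Finset.range i, f j x * ((i.descFactorial j : ℂ) * x ^ (i - j)) := by
            rw [← h1]
            ring
          have hfac : (i.factorial : ℂ) ≠ 0 := by
            exact_mod_cast Nat.factorial_ne_zero i
          have heval : gm.eval x = (i.factorial : ℂ)⁻¹ *
              (q.eval x - ∑ j ∈ Finset.range i, f j x * ((i.descFactorial j : ℂ) * x ^ (i - j))) := by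
            rw [hgm, smul_eq_C_mul, eval_mul, eval_C, eval_sub, eval_finset_sum]
            congr 2
            apply Finset.sum_congr rfl
            intro j hj
            rw [Finset.mem_range] at hj
            rw [smul_eq_C_mul, eval_mul, eval_C, eval_mul, eval_pow, eval_X,
              ← hg j hj (by omega) x]
            ring
          rw [heval, ← hfx]
          field_simp
      · exact ⟨g, fun i him hik x => hg i (by omega) hik x⟩
  obtain ⟨g, hg⟩ := exg (k + 1)
  have hg' : ∀ i ≤ k, ∀ x : ℂ, f i x = (g i).eval x := fun i hi x => hg i (by omega) hi x
  refine ⟨g, hg', ?_⟩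
  apply structural n k hk g
  intro j hj
  obtain ⟨q, hq, hqe⟩ := hpres (X ^ j) (X_pow_mem_Pmod hj)
  have hTq : (∑ i ∈ Finset.range (k + 1), M1 (g i) * D1 ^ i) (X ^ j) = q := by
    apply Polynomial.funext
    intro x
    rw [LinearMap.sum_apply, eval_finset_sum, ← hqe x]
    apply Finset.sum_congr rfl
    intro i hi
    rw [Finset.mem_range] at hi
    rw [Module.End.mul_apply, M1_apply, eval_mul, ← hg' i (by omega) x]
  rw [hTq]
  exact hq
end
end

section
/- Let n ∈ ℕ and k ∈ ℕ be arbitrary. Suppose f₀, …, f_k : ℂ → ℂ are functions such that for every polynomial p ∈ 𝒫ₙ the function x ↦ Σ_{i=0}^{k} f_i(x)·(eval x (p⁽ⁱ⁾)) is the evaluation function of some element of 𝒫ₙ. Then there exists an operator P in the ℂ-linear span of all compositions of at most n elements of {J⁺, J⁻, J⁰} (the empty composition being the identity) such that for every p ∈ 𝒫ₙ and every x ∈ ℂ one has Σ_{i=0}^{k} f_i(x)·(eval x (p⁽ⁱ⁾)) = eval x (P p). -/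
noncomputable section

open Polynomial

/-! On `𝒫ₙ` the monomials `Xʲ` are eigenvectors of `J⁰` with the pairwise distinct eigenvalues
`j - n/2`, so a Lagrange basis polynomial evaluated at `J⁰` isolates a single monomial `X^b`.
Following it by `(J⁺)^(a-b)` when `b ≤ a`, or by `(J⁻)^(b-a)` when `a < b`, gives the matrix
unit `X^b ↦ X^a` of `𝒫ₙ`. Only the `n + 1 - |a - b|` monomials that the shift does not
annihilate need to be interpolated, so the total degree stays at most `n`. Every endomorphism of
`𝒫ₙ` is a combination of matrix units, and the differential operator is linear in `p`. -/

lemma D1_apply (p : ℂ[X]) : D1 p = derivative p := rfl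

lemma M1_apply (g p : ℂ[X]) : M1 g p = g * p := rfl

lemma X_mul_derivative_X_pow (j : ℕ) : (X : ℂ[X]) * derivative (X ^ j) = (j : ℂ) • X ^ j := by
  cases j with
  | zero => simp
  | succ m => rw [derivative_X_pow, smul_eq_C_mul]; push_cast; ring

lemma J0_X_pow (n j : ℕ) : J0 n (X ^ j) = ((j : ℂ) - n / 2) • X ^ j := by
  simp only [J0, LinearMap.sub_apply, Module.End.mul_apply, LinearMap.smul_apply, M1_apply,
    D1_apply, Module.End.one_apply, X_mul_derivative_X_pow, sub_smul]

lemma Jp_X_pow (n j : ℕ) : Jp n (X ^ j) = ((j : ℂ) - n) • X ^ (j + 1) := by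
  simp only [Jp, LinearMap.sub_apply, Module.End.mul_apply, LinearMap.smul_apply, M1_apply,
    D1_apply, sub_smul]
  rw [pow_two, mul_assoc, X_mul_derivative_X_pow, pow_succ', mul_smul_comm]

lemma Jp_pow_X_pow (n d j : ℕ) :
    (Jp n ^ d) (X ^ j) = (∏ i ∈ Finset.range d, ((j : ℂ) + i - n)) • X ^ (j + d) := by
  induction d with
  | zero => simp
  | succ d ih =>
    rw [pow_succ', Module.End.mul_apply, ih, map_smul, Jp_X_pow, Finset.prod_range_succ,
      smul_smul]
    push_cast
    ring_nf

lemma Jm_pow_X_pow (e j : ℕ) :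
    (Jm ^ e) (X ^ j : ℂ[X]) = (j.descFactorial e : ℂ) • X ^ (j - e) := by
  rw [Module.End.pow_apply]
  exact iterate_derivative_X_pow_eq_smul (R := ℂ) j e

lemma prod_range_add_sub_eq_zero_iff (n d j : ℕ) :
    ∏ i ∈ Finset.range d, ((j : ℂ) + i - n) = 0 ↔ j ≤ n ∧ n < j + d := by
  simp only [Finset.prod_eq_zero_iff, Finset.mem_range, sub_eq_zero]
  norm_cast
  exact ⟨fun ⟨i, hi, h⟩ => by omega, fun h => ⟨n - j, by omega, by omega⟩⟩

lemma pow_mul_pow_mem_prodsLE {k d i : ℕ} {S : Set (Module.End ℂ ℂ[X])}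
    {A B : Module.End ℂ ℂ[X]} (hA : A ∈ S) (hB : B ∈ S) (h : d + i ≤ k) :
    A ^ d * B ^ i ∈ prodsLE k S :=
  ⟨List.replicate d A ++ List.replicate i B, by simpa using h,
    by simp +contextual [List.mem_replicate, or_imp, hA, hB], by simp [List.prod_replicate]⟩

lemma pow_mul_aeval_mem_span_prodsLE {k d : ℕ} {S : Set (Module.End ℂ ℂ[X])}
    {A B : Module.End ℂ ℂ[X]} (hA : A ∈ S) (hB : B ∈ S) {L : ℂ[X]} (h : L.natDegree + d ≤ k) :
    A ^ d * aeval B L ∈ Submodule.span ℂ (prodsLE k S) := by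
  rw [aeval_eq_sum_range, Finset.mul_sum]
  refine Submodule.sum_mem _ fun i hi => ?_
  rw [mul_smul_comm]
  exact Submodule.smul_mem _ _ <| Submodule.subset_span <|
    pow_mul_pow_mem_prodsLE hA hB (by rw [Finset.mem_range] at hi; omega)

lemma exists_mul_aeval_J0_apply_X_pow_eq_ite (n : ℕ) {T : Module.End ℂ ℂ[X]} {c : ℕ → ℂ}
    {σ : ℕ → ℕ} (hT : ∀ j, T (X ^ j) = c j • X ^ σ j) {s : Finset ℕ}
    (hs : ∀ j ≤ n, j ∉ s → c j = 0) {b : ℕ} (hb : b ∈ s) (hcb : c b ≠ 0) :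
    ∃ L : ℂ[X], L.natDegree < s.card ∧
      ∀ j ≤ n, (T * aeval (J0 n) L) (X ^ j) = if j = b then X ^ σ b else 0 := by
  have hv : Set.InjOn (fun j : ℕ => (j : ℂ) - n / 2) s :=
    fun i _ j _ h => by simpa using h
  refine ⟨(c b)⁻¹ • Lagrange.basis s (fun j : ℕ => (j : ℂ) - n / 2) b, ?_, fun j hj => ?_⟩
  · calc _ ≤ _ := natDegree_smul_le _ _
      _ < s.card := by
        rw [Lagrange.natDegree_basis hv hb]
        exact Nat.sub_lt (Finset.card_pos.2 ⟨b, hb⟩) one_pos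
  rw [Module.End.mul_apply, Module.End.aeval_apply_of_mem_apply_eq_smul (J0_X_pow n j),
    map_smul, hT, smul_smul, eval_smul, smul_eq_mul]
  split_ifs with hjb
  · subst hjb
    rw [Lagrange.eval_basis_self hv hb, mul_one, inv_mul_cancel₀ hcb, one_smul]
  · by_cases hjs : j ∈ s
    · rw [Lagrange.eval_basis_of_ne (v := fun j : ℕ => (j : ℂ) - n / 2) (Ne.symm hjb) hjs,
        mul_zero, zero_mul, zero_smul]
    · rw [hs j hj hjs, mul_zero, zero_smul]

lemma exists_mem_span_apply_X_pow_eq_ite_of_le {n a b : ℕ} (ha : a ≤ n) (hba : b ≤ a) :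
    ∃ P ∈ Submodule.span ℂ (prodsLE n {Jp n, Jm, J0 n}),
      ∀ j ≤ n, P (X ^ j) = if j = b then X ^ a else 0 := by
  obtain ⟨L, hL, hLX⟩ := exists_mul_aeval_J0_apply_X_pow_eq_ite n (Jp_pow_X_pow n (a - b))
    (s := Finset.range (n - (a - b) + 1)) (b := b)
    (fun j hj hjs => (prod_range_add_sub_eq_zero_iff n _ j).2 (by simp at hjs; omega))
    (by simp; omega) (fun h => by have := (prod_range_add_sub_eq_zero_iff n _ b).1 h; omega)
  refine ⟨Jp n ^ (a - b) * aeval (J0 n) L,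
    pow_mul_aeval_mem_span_prodsLE (by simp) (by simp) (by simp at hL; omega), fun j hj => ?_⟩
  rw [hLX j hj, Nat.add_sub_cancel' hba]

lemma exists_mem_span_apply_X_pow_eq_ite_of_lt {n a b : ℕ} (hb : b ≤ n) (hab : a < b) :
    ∃ P ∈ Submodule.span ℂ (prodsLE n {Jp n, Jm, J0 n}),
      ∀ j ≤ n, P (X ^ j) = if j = b then X ^ a else 0 := by
  obtain ⟨L, hL, hLX⟩ := exists_mul_aeval_J0_apply_X_pow_eq_ite n (Jm_pow_X_pow (b - a))
    (s := Finset.Ico (b - a) (n + 1)) (b := b)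
    (fun j hj hjs => by simp [Nat.descFactorial_eq_zero_iff_lt] at hjs ⊢; omega)
    (by simp; omega) (by simp [Nat.descFactorial_eq_zero_iff_lt])
  refine ⟨Jm ^ (b - a) * aeval (J0 n) L,
    pow_mul_aeval_mem_span_prodsLE (by simp) (by simp) (by simp at hL; omega), fun j hj => ?_⟩
  rw [hLX j hj, Nat.sub_sub_self hab.le]

lemma exists_mem_span_apply_X_pow_eq_ite {n a b : ℕ} (ha : a ≤ n) (hb : b ≤ n) :
    ∃ P ∈ Submodule.span ℂ (prodsLE n {Jp n, Jm, J0 n}),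
      ∀ j ≤ n, P (X ^ j) = if j = b then X ^ a else 0 := by
  rcases le_or_gt b a with hba | hab
  · exact exists_mem_span_apply_X_pow_eq_ite_of_le ha hba
  · exact exists_mem_span_apply_X_pow_eq_ite_of_lt hb hab

lemma exists_mem_span_apply_X_pow_eq (n : ℕ) (q : Fin (n + 1) → ℂ[X])
    (hq : ∀ j, q j ∈ Pmod n) :
    ∃ P ∈ Submodule.span ℂ (prodsLE n {Jp n, Jm, J0 n}),
      ∀ j : Fin (n + 1), P (X ^ (j : ℕ)) = q j := by
  let R : Module.End ℂ ℂ[X] →ₗ[ℂ] Fin (n + 1) → ℂ[X] :=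
    LinearMap.pi fun j => LinearMap.applyₗ (X ^ (j : ℕ))
  have hR : Submodule.pi Set.univ (fun _ => Pmod n) ≤
      (Submodule.span ℂ (prodsLE n {Jp n, Jm, J0 n})).map R := by
    rw [← Submodule.iSup_map_single]
    refine iSup_le fun b => ?_
    rw [Submodule.map_le_iff_le_comap, Pmod, Submodule.span_le]
    rintro _ ⟨a, ha, rfl⟩
    obtain ⟨P, hP, hPX⟩ := exists_mem_span_apply_X_pow_eq_ite ha b.is_le
    exact ⟨P, hP, funext fun j => by simp [R, hPX j j.is_le, Pi.single_apply, Fin.ext_iff]⟩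
  obtain ⟨P, hP, hPq⟩ := hR fun j _ => hq j
  exact ⟨P, hP, fun j => congrFun hPq j⟩

theorem stmt1 (n k : ℕ) (f : ℕ → ℂ → ℂ)
    (hpres : ∀ p ∈ Pmod n, ∃ q ∈ Pmod n, ∀ x : ℂ,
      ∑ i ∈ Finset.range (k + 1), f i x * ((D1 ^ i) p).eval x = q.eval x) :
    ∃ P ∈ Submodule.span ℂ (prodsLE n {Jp n, Jm, J0 n}),
      ∀ p ∈ Pmod n, ∀ x : ℂ,
        ∑ i ∈ Finset.range (k + 1), f i x * ((D1 ^ i) p).eval x = (P p).eval x := by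
  choose q hqP hq using fun j : Fin (n + 1) =>
    hpres (X ^ (j : ℕ)) (Submodule.subset_span ⟨j, j.is_le, rfl⟩)
  obtain ⟨P, hPmem, hPX⟩ := exists_mem_span_apply_X_pow_eq n q hqP
  refine ⟨P, hPmem, fun p hp x => ?_⟩
  let Φ : ℂ[X] →ₗ[ℂ] ℂ → ℂ :=
    LinearMap.pi fun x => ∑ i ∈ Finset.range (k + 1), f i x • (leval x ∘ₗ D1 ^ i)
  have hΦ : Set.EqOn Φ (LinearMap.pi leval ∘ₗ P) (Pmod n) := by
    refine LinearMap.eqOn_span' ?_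
    rintro _ ⟨j, hj, rfl⟩
    funext x
    simpa [Φ, hPX ⟨j, Nat.lt_succ_of_le hj⟩] using hq ⟨j, Nat.lt_succ_of_le hj⟩ x
  simpa [Φ] using congrFun (hΦ hp) x
end
end

section
/- Let λ ∈ ℂ and define on Polynomial ℂ the operators J⁺ = M_{X²}∘D − λ·M_X, J⁻ = D, J⁰ = M_X∘D − (λ/2)·id. For every k ∈ ℕ, the ℂ-subspace of End(Polynomial ℂ) spanned by all compositions of at most k elements of {J⁺, J⁻, J⁰} (the empty composition being the identity) has dimension exactly (k+1)². -/
/-!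
Write `E = J⁺`, `F = J⁻ = D`, `H = J⁰`. On monomials, `E Xⁿ = (n - λ) Xⁿ⁺¹`, `F Xⁿ = n Xⁿ⁻¹` and
`H Xⁿ = (n - λ/2) Xⁿ`, so `[H, E] = E`, `[H, F] = -F`, and `EF`, `FE` are the quadratic polynomials
`H² ∓ H - c` in `H`, with `c = λ²/4 + λ/2`. Moving `H` to the right and replacing `EF`, `FE`
by these polynomials shows that the products of at most `k` generators span the same space as
the `(k + 1)²` ordered monomials `E^(a-b) F^(b-a) H^(min a b)`, `a, b ≤ k`.

These are linearly independent. The monomial indexed by `(a, b)` is an eigenvector of `ad H` with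
eigenvalue `a - b`, and eigenspaces are independent. For a fixed eigenvalue the monomials are
`T * H^m` for one operator `T`. If `T * p(H) = 0`, then evaluating on `Xⁿ` gives
`p(n - λ/2) • T Xⁿ = 0`. Since `T Xⁿ ≠ 0` for all large `n`, `p` has infinitely many roots, so
`p = 0`.
-/

noncomputable section

open Polynomial

section Commutator

variable {R A : Type*} [CommRing R] [Ring A] [Algebra R A] {h x y : A} {μ ν : R}

theorem lie_mul_eq_smul (hx : ⁅h, x⁆ = μ • x) (hy : ⁅h, y⁆ = ν • y) :
    ⁅h, x * y⁆ = (μ + ν) • (x * y) := by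
  rw [Ring.lie_def] at hx hy ⊢
  calc h * (x * y) - x * y * h = (h * x - x * h) * y + x * (h * y - y * h) := by noncomm_ring
    _ = (μ + ν) • (x * y) := by rw [hx, hy, add_smul, smul_mul_assoc, mul_smul_comm]

theorem lie_pow_eq_smul (hx : ⁅h, x⁆ = μ • x) (n : ℕ) : ⁅h, x ^ n⁆ = (n * μ) • x ^ n := by
  induction n with
  | zero => simp [Ring.lie_def]
  | succ n ih =>
    rw [pow_succ, lie_mul_eq_smul ih hx]
    push_cast
    ring_nf

end Commutator

section PBW

variable {R A : Type*} [CommRing R] [Ring A] [Algebra R A] (e f h : A)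

/-- One of the exponents `a - b`, `b - a` (truncated subtraction) is zero. -/
def pbwMonomial (ab : ℕ × ℕ) : A := e ^ (ab.1 - ab.2) * f ^ (ab.2 - ab.1) * h ^ min ab.1 ab.2

variable (R) in
def pbwFiltration (k : ℕ) : Submodule R A :=
  Submodule.span R
    (Set.range fun ab : Fin (k + 1) × Fin (k + 1) => pbwMonomial e f h (ab.1, ab.2))

variable {e f h}

theorem pbwMonomial_mem_pbwFiltration {a b k : ℕ} (ha : a ≤ k) (hb : b ≤ k) :
    pbwMonomial e f h (a, b) ∈ pbwFiltration R e f h k :=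
  Submodule.subset_span ⟨(⟨a, by omega⟩, ⟨b, by omega⟩), rfl⟩

theorem pbwFiltration_mono : Monotone (pbwFiltration R e f h) := by
  intro k l hkl
  rw [pbwFiltration, Submodule.span_le]
  rintro _ ⟨⟨a, b⟩, rfl⟩
  exact pbwMonomial_mem_pbwFiltration (by omega) (by omega)

theorem mul_mem_of_forall_pbwMonomial {s : A} {k : ℕ} {N : Submodule R A}
    (hs : ∀ a b, a ≤ k → b ≤ k → s * pbwMonomial e f h (a, b) ∈ N) {x : A}
    (hx : x ∈ pbwFiltration R e f h k) : s * x ∈ N := by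
  have hle : pbwFiltration R e f h k ≤ N.comap (LinearMap.mulLeft R s) := by
    rw [pbwFiltration, Submodule.span_le]
    rintro _ ⟨⟨a, b⟩, rfl⟩
    exact hs a b a.is_le b.is_le
  exact hle hx

theorem lie_pbwMonomial (he : ⁅h, e⁆ = e) (hf : ⁅h, f⁆ = -f) (a b : ℕ) :
    ⁅h, pbwMonomial e f h (a, b)⁆ = ((a : R) - b) • pbwMonomial e f h (a, b) := by
  have he' : ⁅h, e⁆ = (1 : R) • e := by rw [one_smul, he]
  have hf' : ⁅h, f⁆ = (-1 : R) • f := by rw [neg_one_smul, hf]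
  have hh' : ⁅h, h⁆ = (0 : R) • h := by rw [zero_smul, Ring.lie_def, sub_self]
  rw [pbwMonomial, lie_mul_eq_smul (lie_mul_eq_smul (lie_pow_eq_smul he' _)
    (lie_pow_eq_smul hf' _)) (lie_pow_eq_smul hh' _)]
  congr 1
  rcases le_total a b with hab | hab <;> rw [Nat.sub_eq_zero_of_le hab, Nat.cast_sub hab] <;> ring

theorem h_mul_pbwMonomial (he : ⁅h, e⁆ = e) (hf : ⁅h, f⁆ = -f) (a b : ℕ) :
    h * pbwMonomial e f h (a, b) =
      pbwMonomial e f h (a + 1, b + 1) + ((a : R) - b) • pbwMonomial e f h (a, b) := by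
  have hcomm := lie_pbwMonomial (R := R) he hf a b
  rw [Ring.lie_def, sub_eq_iff_eq_add'] at hcomm
  rw [hcomm, pbwMonomial, pbwMonomial, mul_assoc, ← pow_succ, Nat.add_sub_add_right,
    Nat.add_sub_add_right, Nat.add_min_add_right]

theorem e_mul_pbwMonomial_of_snd_le {a b : ℕ} (hba : b ≤ a) :
    e * pbwMonomial e f h (a, b) = pbwMonomial e f h (a + 1, b) := by
  simp only [pbwMonomial]
  rw [show a + 1 - b = a - b + 1 by omega, show b - (a + 1) = b - a by omega,
    show min (a + 1) b = min a b by omega, pow_succ']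
  simp only [mul_assoc]

theorem e_mul_pbwMonomial_succ {a b : ℕ} (hab : a ≤ b) :
    e * pbwMonomial e f h (a, b + 1) = e * f * pbwMonomial e f h (a, b) := by
  simp only [pbwMonomial]
  rw [show a - (b + 1) = 0 by omega, show a - b = 0 by omega, show b + 1 - a = b - a + 1 by omega,
    show min a (b + 1) = min a b by omega, pow_succ']
  simp only [pow_zero, one_mul, mul_assoc]

theorem f_mul_pbwMonomial_of_fst_le {a b : ℕ} (hab : a ≤ b) :
    f * pbwMonomial e f h (a, b) = pbwMonomial e f h (a, b + 1) := by
  simp only [pbwMonomial]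
  rw [show a - (b + 1) = 0 by omega, show a - b = 0 by omega, show b + 1 - a = b - a + 1 by omega,
    show min a (b + 1) = min a b by omega, pow_succ']
  simp only [pow_zero, one_mul, mul_assoc]

theorem f_mul_pbwMonomial_succ {a b : ℕ} (hba : b ≤ a) :
    f * pbwMonomial e f h (a + 1, b) = f * e * pbwMonomial e f h (a, b) := by
  simp only [pbwMonomial]
  rw [show a + 1 - b = a - b + 1 by omega, show b - (a + 1) = 0 by omega, show b - a = 0 by omega,
    show min (a + 1) b = min a b by omega, pow_succ']
  simp only [pow_zero, mul_one, mul_assoc]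

theorem h_mul_mem_pbwFiltration (he : ⁅h, e⁆ = e) (hf : ⁅h, f⁆ = -f) {k : ℕ} {x : A}
    (hx : x ∈ pbwFiltration R e f h k) : h * x ∈ pbwFiltration R e f h (k + 1) := by
  refine mul_mem_of_forall_pbwMonomial (fun a b ha hb => ?_) hx
  rw [h_mul_pbwMonomial (R := R) he hf]
  exact add_mem (pbwMonomial_mem_pbwFiltration (by omega) (by omega))
    (Submodule.smul_mem _ _ (pbwFiltration_mono k.le_succ (pbwMonomial_mem_pbwFiltration ha hb)))

theorem quadratic_mul_mem_pbwFiltration (he : ⁅h, e⁆ = e) (hf : ⁅h, f⁆ = -f) (σ c : R) {k : ℕ}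
    {x : A} (hx : x ∈ pbwFiltration R e f h k) :
    (h * h + σ • h - c • 1) * x ∈ pbwFiltration R e f h (k + 2) := by
  rw [sub_mul, add_mul, mul_assoc, smul_mul_assoc, smul_mul_assoc, one_mul]
  have hhx := h_mul_mem_pbwFiltration he hf hx
  exact sub_mem (add_mem (h_mul_mem_pbwFiltration he hf hhx)
    (Submodule.smul_mem _ _ (pbwFiltration_mono (by omega) hhx)))
    (Submodule.smul_mem _ _ (pbwFiltration_mono (by omega) hx))

theorem mul_mem_pbwFiltration {c : R} (he : ⁅h, e⁆ = e) (hf : ⁅h, f⁆ = -f)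
    (hef : e * f = h * h - h - c • 1) (hfe : f * e = h * h + h - c • 1) {s : A}
    (hs : s ∈ ({e, f, h} : Set A)) {k : ℕ} {x : A} (hx : x ∈ pbwFiltration R e f h k) :
    s * x ∈ pbwFiltration R e f h (k + 1) := by
  rcases hs with rfl | rfl | rfl
  · refine mul_mem_of_forall_pbwMonomial (fun a b ha hb => ?_) hx
    rcases le_or_gt b a with hba | hab
    · rw [e_mul_pbwMonomial_of_snd_le hba]
      exact pbwMonomial_mem_pbwFiltration (by omega) (by omega)
    · obtain ⟨b, rfl⟩ : ∃ b', b = b' + 1 := ⟨b - 1, by omega⟩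
      rw [e_mul_pbwMonomial_succ (by omega), hef,
        show h * h - h = h * h + (-1 : R) • h by rw [neg_one_smul, sub_eq_add_neg]]
      exact pbwFiltration_mono (by omega) (quadratic_mul_mem_pbwFiltration he hf (-1) c
        (pbwMonomial_mem_pbwFiltration (k := b) (by omega) le_rfl))
  · refine mul_mem_of_forall_pbwMonomial (fun a b ha hb => ?_) hx
    rcases le_or_gt a b with hab | hba
    · rw [f_mul_pbwMonomial_of_fst_le hab]
      exact pbwMonomial_mem_pbwFiltration (by omega) (by omega)
    · obtain ⟨a, rfl⟩ : ∃ a', a = a' + 1 := ⟨a - 1, by omega⟩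
      rw [f_mul_pbwMonomial_succ (by omega), hfe,
        show h * h + h = h * h + (1 : R) • h by rw [one_smul]]
      exact pbwFiltration_mono (by omega) (quadratic_mul_mem_pbwFiltration he hf 1 c
        (pbwMonomial_mem_pbwFiltration (k := a) le_rfl (by omega)))
  · exact h_mul_mem_pbwFiltration he hf hx

theorem list_prod_mem_pbwFiltration {c : R} (he : ⁅h, e⁆ = e) (hf : ⁅h, f⁆ = -f)
    (hef : e * f = h * h - h - c • 1) (hfe : f * e = h * h + h - c • 1) (l : List A)
    (hl : ∀ s ∈ l, s ∈ ({e, f, h} : Set A)) : l.prod ∈ pbwFiltration R e f h l.length := by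
  induction l with
  | nil =>
    simpa [pbwMonomial] using
      pbwMonomial_mem_pbwFiltration (R := R) (e := e) (f := f) (h := h) (le_refl 0) (le_refl 0)
  | cons s l ih =>
    exact mul_mem_pbwFiltration he hf hef hfe (hl s List.mem_cons_self)
      (ih fun t ht => hl t (List.mem_cons_of_mem s ht))

theorem pbwMonomial_eq_list_prod (a b : ℕ) : pbwMonomial e f h (a, b) =
    (List.replicate (a - b) e ++ List.replicate (b - a) f ++ List.replicate (min a b) h).prod := by
  simp [pbwMonomial, List.prod_append, List.prod_replicate, mul_assoc]

end PBW

theorem span_prodsLE_eq_pbwFiltration {e f h : Module.End ℂ (Polynomial ℂ)} {c : ℂ}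
    (he : ⁅h, e⁆ = e) (hf : ⁅h, f⁆ = -f) (hef : e * f = h * h - h - c • 1)
    (hfe : f * e = h * h + h - c • 1) (k : ℕ) :
    Submodule.span ℂ (prodsLE k {e, f, h}) = pbwFiltration ℂ e f h k := by
  apply le_antisymm
  · rw [Submodule.span_le]
    rintro _ ⟨l, hlen, hl, rfl⟩
    exact pbwFiltration_mono hlen (list_prod_mem_pbwFiltration he hf hef hfe l hl)
  · rw [pbwFiltration, Submodule.span_le]
    rintro _ ⟨⟨a, b⟩, rfl⟩
    refine Submodule.subset_span ⟨_, ?_, ?_, (pbwMonomial_eq_list_prod a b).symm⟩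
    · simp only [List.length_append, List.length_replicate]
      omega
    · simp only [List.mem_append, List.mem_replicate]
      rintro s ((⟨-, rfl⟩ | ⟨-, rfl⟩) | ⟨-, rfl⟩) <;> simp

theorem finrank_pbwFiltration {K A : Type*} [Field K] [Ring A] [Algebra K A] {e f h : A}
    (hli : LinearIndependent K (pbwMonomial e f h)) (k : ℕ) :
    Module.finrank K (pbwFiltration K e f h k) = (k + 1) ^ 2 := by
  rw [pbwFiltration, finrank_span_eq_card, Fintype.card_prod, Fintype.card_fin, sq]
  refine hli.comp _ fun x y hxy => ?_
  simp only [Prod.mk.injEq] at hxy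
  exact Prod.ext (Fin.ext hxy.1) (Fin.ext hxy.2)

theorem iSupIndep.linearIndependent_of_linearIndepOn_fiber {ι η R M : Type*} [Ring R]
    [AddCommGroup M] [Module R M] {p : η → Submodule R M} (hp : iSupIndep p) {v : ι → M}
    {φ : ι → η} (hv : ∀ i, v i ∈ p (φ i)) (hfib : ∀ j, LinearIndepOn R v (φ ⁻¹' {j})) :
    LinearIndependent R v := by
  rw [← linearIndependent_equiv (Equiv.sigmaFiberEquiv φ)]
  refine linearIndependent_iUnion_finite (f := fun j (i : {i // φ i = j}) => v i) hfib
    fun j t _ hjt => (hp.disjoint_biSup hjt).mono ?_ (iSup₂_mono fun j' _ => ?_) <;>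
  · rw [Submodule.span_le]
    rintro _ ⟨⟨i, rfl⟩, rfl⟩
    exact hv i

theorem Module.End.linearIndependent_mul_pow_of_hasEigenvector {K M : Type*} [Field K]
    [AddCommGroup M] [Module K M] {T h : Module.End K M} {μ : ℕ → K} (hμ : Function.Injective μ)
    {v : ℕ → M} (hv : ∀ n, h.HasEigenvector (μ n) (v n)) (hT : ∀ n, T (v n) ≠ 0) :
    LinearIndependent K (fun m : ℕ => T * h ^ m) := by
  let Φ : Polynomial K →ₗ[K] Module.End K M :=
    LinearMap.mulLeft K T ∘ₗ (Polynomial.aeval h).toLinearMap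
  have hΦ : LinearMap.ker Φ = ⊥ := by
    refine LinearMap.ker_eq_bot'.2 fun p hp => Polynomial.eq_zero_of_infinite_isRoot p ?_
    refine Set.infinite_of_injective_forall_mem hμ fun n => ?_
    have hpv := LinearMap.congr_fun hp (v n)
    simp only [Φ, LinearMap.comp_apply, LinearMap.mulLeft_apply, AlgHom.toLinearMap_apply,
      Module.End.mul_apply, Module.End.aeval_apply_of_hasEigenvector (hv n), map_smul,
      LinearMap.zero_apply, smul_eq_zero] at hpv
    exact hpv.resolve_right (hT n)
  have hΦX : Φ ∘ Polynomial.basisMonomials K = fun m => T * h ^ m := by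
    ext m : 1
    simp [Φ]
  exact hΦX ▸ (Polynomial.basisMonomials K).linearIndependent.map' Φ hΦ

theorem Polynomial.linearMap_ext_X_pow {R M : Type*} [CommSemiring R] [AddCommMonoid M]
    [Module R M] {f g : Polynomial R →ₗ[R] M} (hfg : ∀ n : ℕ, f (X ^ n) = g (X ^ n)) : f = g := by
  refine Polynomial.lhom_ext' fun n => LinearMap.ext_ring ?_
  simpa [Polynomial.monomial_one_right_eq_X_pow] using hfg n

namespace PolynomialSl2

def Jplus (lam : ℂ) : Module.End ℂ (Polynomial ℂ) := M1 (X ^ 2) * D1 - lam • M1 X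

def Jzero (lam : ℂ) : Module.End ℂ (Polynomial ℂ) := M1 X * D1 - (lam / 2) • 1

variable (lam : ℂ) (n : ℕ)

theorem D1_X_pow : D1 (X ^ n) = (n : ℂ) • X ^ (n - 1) := by
  simp [D1, derivative_X_pow, smul_eq_C_mul]

theorem Jplus_X_pow : Jplus lam (X ^ n) = ((n : ℂ) - lam) • X ^ (n + 1) := by
  rcases n with _ | n
  · simp [Jplus, M1, D1, smul_eq_C_mul]
  · simp only [Jplus, M1, D1, LinearMap.sub_apply, Module.End.mul_apply, LinearMap.smul_apply,
      LinearMap.mulLeft_apply, derivative_X_pow, smul_eq_C_mul, C_sub, Nat.add_sub_cancel]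
    ring

theorem Jzero_X_pow : Jzero lam (X ^ n) = ((n : ℂ) - lam / 2) • X ^ n := by
  rcases n with _ | n
  · simp [Jzero, M1, D1, smul_eq_C_mul]
  · simp only [Jzero, M1, D1, LinearMap.sub_apply, Module.End.mul_apply, LinearMap.smul_apply,
      LinearMap.mulLeft_apply, Module.End.one_apply, derivative_X_pow, smul_eq_C_mul, C_sub,
      Nat.add_sub_cancel]
    ring

theorem lie_Jzero_Jplus : ⁅Jzero lam, Jplus lam⁆ = Jplus lam := by
  refine Polynomial.linearMap_ext_X_pow fun n => ?_
  simp only [Ring.lie_def, LinearMap.sub_apply, Module.End.mul_apply, Jplus_X_pow, Jzero_X_pow,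
    map_smul]
  push_cast
  module

theorem lie_Jzero_D1 : ⁅Jzero lam, D1⁆ = -D1 := by
  refine Polynomial.linearMap_ext_X_pow fun n => ?_
  simp only [Ring.lie_def, LinearMap.sub_apply, LinearMap.neg_apply, Module.End.mul_apply,
    D1_X_pow, Jzero_X_pow, map_smul]
  rcases n with _ | n <;> push_cast [Nat.add_sub_cancel] <;> module

theorem Jplus_mul_D1 :
    Jplus lam * D1 = Jzero lam * Jzero lam - Jzero lam - (lam ^ 2 / 4 + lam / 2) • 1 := by
  refine Polynomial.linearMap_ext_X_pow fun n => ?_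
  simp only [LinearMap.sub_apply, LinearMap.smul_apply, Module.End.mul_apply,
    Module.End.one_apply, D1_X_pow, Jplus_X_pow, Jzero_X_pow, map_smul]
  rcases n with _ | n <;> push_cast [Nat.add_sub_cancel] <;> module

theorem D1_mul_Jplus :
    D1 * Jplus lam = Jzero lam * Jzero lam + Jzero lam - (lam ^ 2 / 4 + lam / 2) • 1 := by
  refine Polynomial.linearMap_ext_X_pow fun n => ?_
  simp only [LinearMap.sub_apply, LinearMap.add_apply, LinearMap.smul_apply, Module.End.mul_apply,
    Module.End.one_apply, D1_X_pow, Jplus_X_pow, Jzero_X_pow, map_smul, Nat.add_sub_cancel]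
  push_cast
  module

theorem Jzero_hasEigenvector : (Jzero lam).HasEigenvector ((n : ℂ) - lam / 2) (X ^ n) :=
  ⟨Module.End.mem_eigenspace_iff.2 (Jzero_X_pow lam n), pow_ne_zero n X_ne_zero⟩

theorem D1_pow_X_pow (b : ℕ) : (D1 ^ b) (X ^ n) = (n.descFactorial b : ℂ) • X ^ (n - b) := by
  rw [Module.End.pow_apply, D1, ← iterate_derivative_X_pow_eq_smul]

theorem Jplus_pow_X_pow_ne_zero (a : ℕ) {n : ℕ} (hn : ‖lam‖ < n) :
    (Jplus lam ^ a) (X ^ n) ≠ 0 := by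
  induction a generalizing n with
  | zero => exact pow_ne_zero n X_ne_zero
  | succ a ih =>
    have hlam : (n : ℂ) - lam ≠ 0 := by
      rintro hn'
      rw [sub_eq_zero] at hn'
      simp [← hn'] at hn
    rw [pow_succ, Module.End.mul_apply, Jplus_X_pow, map_smul]
    exact smul_ne_zero hlam (ih (by push_cast; linarith))

theorem Jplus_pow_mul_D1_pow_X_pow_ne_zero (a b : ℕ) {n : ℕ} (hn : b + ‖lam‖ < n) :
    (Jplus lam ^ a * D1 ^ b) (X ^ n) ≠ 0 := by
  have hbn : b ≤ n := by exact_mod_cast (le_add_of_nonneg_right (norm_nonneg lam)).trans hn.le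
  rw [Module.End.mul_apply, D1_pow_X_pow, map_smul]
  refine smul_ne_zero (Nat.cast_ne_zero.2 (Nat.descFactorial_eq_zero_iff_lt.not.2 (by omega)))
    (Jplus_pow_X_pow_ne_zero lam a ?_)
  rw [Nat.cast_sub hbn]
  linarith

theorem linearIndependent_mul_Jzero_pow (a b : ℕ) :
    LinearIndependent ℂ fun m => Jplus lam ^ a * D1 ^ b * Jzero lam ^ m := by
  obtain ⟨N, hN⟩ := exists_nat_gt (b + ‖lam‖)
  refine Module.End.linearIndependent_mul_pow_of_hasEigenvector
    (μ := fun n => ((n + N : ℕ) : ℂ) - lam / 2) (v := fun n => X ^ (n + N))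
    (fun i j hij => ?_) (fun n => Jzero_hasEigenvector lam _) fun n => ?_
  · simpa using hij
  · refine Jplus_pow_mul_D1_pow_X_pow_ne_zero lam a b ?_
    push_cast
    linarith [(n.cast_nonneg : (0 : ℝ) ≤ n)]

theorem linearIndependent_pbwMonomial :
    LinearIndependent ℂ (pbwMonomial (Jplus lam) D1 (Jzero lam)) := by
  refine iSupIndep.linearIndependent_of_linearIndepOn_fiber
    ((Module.End.eigenspaces_iSupIndep
      (LinearMap.mulLeft ℂ (Jzero lam) - LinearMap.mulRight ℂ (Jzero lam))).comp Int.cast_injective)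
    (φ := fun ab : ℕ × ℕ => (ab.1 : ℤ) - ab.2) (fun ab => ?_) fun r => ?_
  · rw [Function.comp_apply, Module.End.mem_eigenspace_iff, LinearMap.sub_apply,
      LinearMap.mulLeft_apply, LinearMap.mulRight_apply, ← Ring.lie_def,
      lie_pbwMonomial (R := ℂ) (lie_Jzero_Jplus lam) (lie_Jzero_D1 lam)]
    push_cast
    rfl
  · have hfiber : (fun ab : ℕ × ℕ => (ab.1 : ℤ) - ab.2) ⁻¹' {r} =
        Set.range fun m : ℕ => (m + r.toNat, m + (-r).toNat) := by
      ext ⟨a, b⟩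
      simp only [Set.mem_preimage, Set.mem_singleton_iff, Set.mem_range, Prod.mk.injEq]
      constructor
      · rintro rfl
        exact ⟨min a b, by omega, by omega⟩
      · rintro ⟨m, rfl, rfl⟩
        omega
    have hpbw : pbwMonomial (Jplus lam) D1 (Jzero lam) ∘
        (fun m : ℕ => (m + r.toNat, m + (-r).toNat)) =
          fun m => Jplus lam ^ r.toNat * D1 ^ (-r).toNat * Jzero lam ^ m := by
      funext m
      simp only [Function.comp_apply, pbwMonomial]
      congr 3 <;> omega
    rw [hfiber, linearIndepOn_range_iff fun m m' hm => by simpa using congrArg Prod.fst hm, hpbw]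
    exact linearIndependent_mul_Jzero_pow lam r.toNat (-r).toNat

end PolynomialSl2

theorem stmt2 (lam : ℂ) (k : ℕ) :
    Module.finrank ℂ ↥(Submodule.span ℂ (prodsLE k
      {M1 (X ^ 2) * D1 - lam • M1 X, D1, M1 X * D1 - (lam / 2) • 1})) = (k + 1) ^ 2 := by
  open PolynomialSl2 in
  calc Module.finrank ℂ (Submodule.span ℂ (prodsLE k {Jplus lam, D1, Jzero lam}))
      = Module.finrank ℂ (pbwFiltration ℂ (Jplus lam) D1 (Jzero lam) k) := by
        rw [span_prodsLE_eq_pbwFiltration (lie_Jzero_Jplus lam) (lie_Jzero_D1 lam)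
          (Jplus_mul_D1 lam) (D1_mul_Jplus lam)]
    _ = (k + 1) ^ 2 := finrank_pbwFiltration (linearIndependent_pbwMonomial lam) k
end
end
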